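/- Uniqueness of flows for quasi-Lipschitz fields: under the same hypotheses on u as above (bounded and quasi-Lipschitz in space uniformly in time), any two continuous solutions Φₜ(a), Ψₜ(a) of the integral equation X(t) = a + ∫₀ᵗ u(X(s), s) ds on [0, T] coincide. -/

import Mathlib

/-!
For every `L ≥ 0` the modulus satisfies `chi r ≤ e^{-L} + (1 + L) r`, so the difference `ρ` of two
solutions obeys `ρ' ≤ C (1 + L) ρ + C e^{-L}` with `ρ = 0` at the start. Over a time step
`τ ≤ 1 / (2C)` Gronwall's inequality gives `ρ ≤ e^{-L} e^{(1 + L)/2} = e^{(1 - L)/2}`, which tends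
to `0` as `L → ∞`. Hence solutions that agree at time `t₀` agree on `[t₀, t₀ + 1/(2C)]`, and
finitely many such steps cover `[0, T]`.
-/

open Set Filter Topology MeasureTheory intervalIntegral Real

noncomputable def chi (r : ℝ) : ℝ := if r < 1 then (1 - Real.log r) * r else 1

theorem chi_le_exp_neg_add_mul {r L : ℝ} (hr : 0 ≤ r) (hL : 0 ≤ L) :
    chi r ≤ exp (-L) + (1 + L) * r := by
  unfold chi
  split_ifs with hr1
  · rcases hr.eq_or_lt with rfl | hr0
    · simpa using (exp_pos (-L)).le
    · have hlog : -L - log r ≤ exp (-L) / r - 1 := by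
        simpa [log_div (exp_pos _).ne' hr0.ne'] using
          log_le_sub_one_of_pos (div_pos (exp_pos (-L)) hr0)
      have hmul : r * (exp (-L) / r - 1) = exp (-L) - r := by field_simp
      nlinarith [mul_le_mul_of_nonneg_left hlog hr0.le]
  · nlinarith [exp_pos (-L)]

theorem hasDerivWithinAt_Ici_of_eq_add_integral {E : Type*} [NormedAddCommGroup E]
    [NormedSpace ℝ E] [CompleteSpace E] {v X : ℝ → E} {a : E} {c T x : ℝ}
    (hv : ContinuousOn v (Icc c T)) (hX : ∀ t ∈ Icc c T, X t = a + ∫ s in c..t, v s)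
    (hx : x ∈ Ico c T) : HasDerivWithinAt X (v x) (Ici x) x := by
  have hxT : x ∈ Icc c T := Ico_subset_Icc_self hx
  have hIcc : Icc c T ∈ 𝓝[≥] x :=
    mem_of_superset (Icc_mem_nhdsGE hx.2) (Icc_subset_Icc_left hx.1)
  have : Fact (x ∈ Icc c T) := ⟨hxT⟩
  have hFTC : HasDerivWithinAt (fun t => a + ∫ s in c..t, v s) (v x) (Icc c T) x :=
    (integral_hasDerivWithinAt_right
      (hv.mono (uIcc_subset_Icc (left_mem_Icc.2 (hx.1.trans hx.2.le)) hxT)).intervalIntegrable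
      ⟨Icc c T, self_mem_nhdsWithin, hv.aestronglyMeasurable measurableSet_Icc⟩
      (hv x hxT)).const_add a
  exact (hFTC.mono_of_mem_nhdsWithin hIcc).congr_of_eventuallyEq
    (eventually_of_mem hIcc hX) (hX x hxT)

section QuasiLipschitz

variable {E : Type*} [NormedAddCommGroup E] [NormedSpace ℝ E] {C t₀ t₁ : ℝ} {v : E → ℝ → E}
  {Φ Ψ : ℝ → E}

theorem norm_sub_le_exp_of_chi_bound (hC : 0 < C)
    (hqL : ∀ x₁ x₂ t, ‖v x₁ t - v x₂ t‖ ≤ C * chi (dist x₁ x₂)) (hstep : t₁ - t₀ ≤ 1 / (2 * C))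
    (hΦc : ContinuousOn Φ (Icc t₀ t₁)) (hΨc : ContinuousOn Ψ (Icc t₀ t₁))
    (hΦ : ∀ t ∈ Ico t₀ t₁, HasDerivWithinAt Φ (v (Φ t) t) (Ici t) t)
    (hΨ : ∀ t ∈ Ico t₀ t₁, HasDerivWithinAt Ψ (v (Ψ t) t) (Ici t) t)
    (h₀ : Φ t₀ = Ψ t₀) {L : ℝ} (hL : 0 ≤ L) {t : ℝ} (ht : t ∈ Icc t₀ t₁) :
    ‖Φ t - Ψ t‖ ≤ exp ((1 - L) / 2) := by
  set K := C * (1 + L) with hKdef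
  have hK : 0 < K := by positivity
  have hbound : ∀ x ∈ Ico t₀ t₁,
      ‖v (Φ x) x - v (Ψ x) x‖ ≤ K * ‖Φ x - Ψ x‖ + C * exp (-L) := fun x _ =>
    calc ‖v (Φ x) x - v (Ψ x) x‖ ≤ C * chi (dist (Φ x) (Ψ x)) := hqL _ _ _
      _ ≤ C * (exp (-L) + (1 + L) * ‖Φ x - Ψ x‖) := by
        gcongr
        rw [dist_eq_norm]
        exact chi_le_exp_neg_add_mul (norm_nonneg _) hL
      _ = K * ‖Φ x - Ψ x‖ + C * exp (-L) := by ring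
  have hgronwall := norm_le_gronwallBound_of_norm_deriv_right_le (hΦc.sub hΨc)
    (fun x hx => (hΦ x hx).sub (hΨ x hx)) (by simp [h₀] : ‖Φ t₀ - Ψ t₀‖ ≤ 0) hbound t ht
  have hKτ : K * (t - t₀) ≤ (1 + L) / 2 :=
    calc K * (t - t₀) ≤ K * (1 / (2 * C)) := by gcongr; linarith [ht.2]
      _ = (1 + L) / 2 := by rw [hKdef]; field_simp
  have hεK : C * exp (-L) / K ≤ exp (-L) := by
    rw [div_le_iff₀ hK, hKdef]
    nlinarith [mul_nonneg (mul_pos hC (exp_pos (-L))).le hL]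
  calc ‖Φ t - Ψ t‖ ≤ gronwallBound 0 K (C * exp (-L)) (t - t₀) := hgronwall
    _ = C * exp (-L) / K * (exp (K * (t - t₀)) - 1) := by
      simp [gronwallBound_of_K_ne_0 hK.ne']
    _ ≤ exp (-L) * exp ((1 + L) / 2) := by
      gcongr
      · linarith [one_le_exp (mul_nonneg hK.le (sub_nonneg.2 ht.1))]
      · linarith [exp_le_exp.2 hKτ]
    _ = exp ((1 - L) / 2) := by rw [← exp_add]; ring_nf

theorem eqOn_Icc_of_chi_bound (hC : 0 < C)
    (hqL : ∀ x₁ x₂ t, ‖v x₁ t - v x₂ t‖ ≤ C * chi (dist x₁ x₂)) (hstep : t₁ - t₀ ≤ 1 / (2 * C))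
    (hΦc : ContinuousOn Φ (Icc t₀ t₁)) (hΨc : ContinuousOn Ψ (Icc t₀ t₁))
    (hΦ : ∀ t ∈ Ico t₀ t₁, HasDerivWithinAt Φ (v (Φ t) t) (Ici t) t)
    (hΨ : ∀ t ∈ Ico t₀ t₁, HasDerivWithinAt Ψ (v (Ψ t) t) (Ici t) t)
    (h₀ : Φ t₀ = Ψ t₀) : EqOn Φ Ψ (Icc t₀ t₁) := by
  intro t ht
  have hlim : Tendsto (fun L : ℝ => exp ((1 - L) / 2)) atTop (𝓝 0) :=
    tendsto_exp_atBot.comp <|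
      (tendsto_atBot_add_const_left _ 1 tendsto_neg_atTop_atBot).atBot_div_const two_pos
  have hle : ‖Φ t - Ψ t‖ ≤ 0 := ge_of_tendsto hlim <| (eventually_ge_atTop 0).mono
    fun L hL => norm_sub_le_exp_of_chi_bound hC hqL hstep hΦc hΨc hΦ hΨ h₀ hL ht
  exact sub_eq_zero.1 (norm_le_zero_iff.1 hle)

end QuasiLipschitz

theorem forall_mem_Icc_of_step {P : ℝ → Prop} {T h : ℝ} (hh : 0 < h) (h0 : P 0)
    (hstep : ∀ t₀ t, 0 ≤ t₀ → t₀ ≤ t → t ≤ T → t - t₀ ≤ h → P t₀ → P t) :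
    ∀ t ∈ Icc 0 T, P t := by
  have hn : ∀ n : ℕ, ∀ t ∈ Icc 0 T, t ≤ n * h → P t := by
    intro n
    induction n with
    | zero =>
      intro t ht htn
      rwa [le_antisymm (by simpa using htn) ht.1]
    | succ n ih =>
      intro t ht htn
      by_cases hle : t ≤ n * h
      · exact ih t ht hle
      · rw [not_le] at hle
        push_cast at htn
        exact hstep (n * h) t (by positivity) hle.le ht.2 (by linarith)
          (ih _ ⟨by positivity, hle.le.trans ht.2⟩ le_rfl)
  intro t ht
  obtain ⟨n, hn'⟩ := exists_nat_ge (t / h)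
  exact hn n t ht ((div_le_iff₀ hh).1 hn')

theorem stmt18_general (T C : ℝ) (hC : 0 < C)
    (u : EuclideanSpace ℝ (Fin 2) → ℝ → EuclideanSpace ℝ (Fin 2))
    (hucont : Continuous fun p : EuclideanSpace ℝ (Fin 2) × ℝ => u p.1 p.2)
    (hqL : ∀ x₁ x₂ t, ‖u x₁ t - u x₂ t‖ ≤ C * chi (dist x₁ x₂))
    (a : EuclideanSpace ℝ (Fin 2)) (Φ Ψ : ℝ → EuclideanSpace ℝ (Fin 2))
    (hΦc : ContinuousOn Φ (Set.Icc 0 T)) (hΨc : ContinuousOn Ψ (Set.Icc 0 T))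
    (hΦ : ∀ t ∈ Set.Icc 0 T, Φ t = a + ∫ s in (0:ℝ)..t, u (Φ s) s)
    (hΨ : ∀ t ∈ Set.Icc 0 T, Ψ t = a + ∫ s in (0:ℝ)..t, u (Ψ s) s) :
    ∀ t ∈ Set.Icc 0 T, Φ t = Ψ t := by
  have hderiv : ∀ X : ℝ → EuclideanSpace ℝ (Fin 2), ContinuousOn X (Icc 0 T) →
      (∀ t ∈ Icc 0 T, X t = a + ∫ s in (0:ℝ)..t, u (X s) s) →
      ∀ t ∈ Ico 0 T, HasDerivWithinAt X (u (X t) t) (Ici t) t := fun X hXc hX _ ht =>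
    hasDerivWithinAt_Ici_of_eq_add_integral (v := fun s => u (X s) s)
      (hucont.comp_continuousOn (f := fun s => (X s, s)) (hXc.prodMk continuousOn_id)) hX ht
  intro t ht
  have h0T : (0 : ℝ) ∈ Icc 0 T := ⟨le_rfl, ht.1.trans ht.2⟩
  refine forall_mem_Icc_of_step (P := fun t => Φ t = Ψ t) (h := 1 / (2 * C)) (by positivity)
    ?_ ?_ t ht
  · rw [hΦ 0 h0T, hΨ 0 h0T, integral_same, integral_same]
  · intro t₀ t₁ ht₀ h01 ht₁ hstep heq
    have hIcc : Icc t₀ t₁ ⊆ Icc 0 T := Icc_subset_Icc ht₀ ht₁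
    have hIco : Ico t₀ t₁ ⊆ Ico 0 T := Ico_subset_Ico ht₀ ht₁
    exact eqOn_Icc_of_chi_bound hC hqL hstep (hΦc.mono hIcc) (hΨc.mono hIcc)
      (fun x hx => hderiv Φ hΦc hΦ x (hIco hx)) (fun x hx => hderiv Ψ hΨc hΨ x (hIco hx))
      heq ⟨h01, le_rfl⟩

theorem stmt18 (T C : ℝ) (hT : 0 < T) (hC : 0 < C)
    (u : EuclideanSpace ℝ (Fin 2) → ℝ → EuclideanSpace ℝ (Fin 2))
    (hucont : Continuous fun p : EuclideanSpace ℝ (Fin 2) × ℝ => u p.1 p.2)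
    (hbdd : ∀ x t, ‖u x t‖ ≤ C)
    (hqL : ∀ x₁ x₂ t, ‖u x₁ t - u x₂ t‖ ≤ C * chi (dist x₁ x₂))
    (a : EuclideanSpace ℝ (Fin 2)) (Φ Ψ : ℝ → EuclideanSpace ℝ (Fin 2))
    (hΦc : ContinuousOn Φ (Set.Icc 0 T)) (hΨc : ContinuousOn Ψ (Set.Icc 0 T))
    (hΦ : ∀ t ∈ Set.Icc 0 T, Φ t = a + ∫ s in (0:ℝ)..t, u (Φ s) s)
    (hΨ : ∀ t ∈ Set.Icc 0 T, Ψ t = a + ∫ s in (0:ℝ)..t, u (Ψ s) s) :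
    ∀ t ∈ Set.Icc 0 T, Φ t = Ψ t :=
  stmt18_general T C hC u hucont hqL a Φ Ψ hΦc hΨc hΦ hΨ
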